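/- arXiv:1906.09710 — 3 statements merged into one kernel-verified Lean document; each statement's English description precedes it below -/
import Mathlib

section
/- Let a, a', b, b' be finite index types, let X : Matrix b' b ℂ and Y : Matrix a' a ℂ, and let V : Matrix b a ℂ and W : Matrix b' a' ℂ satisfy Vᴴ·V = 1, V·Vᴴ = 1, Wᴴ·W = 1, W·Wᴴ = 1. If X·V = W·Y, then √(X·Xᴴ)·W = W·√(Y·Yᴴ), where √ denotes the positive semidefinite square root of the positive semidefinite matrices X·Xᴴ and Y·Yᴴ. -/
/-! Since `X * V = W * Y` with `V` unitary, `X * Xᴴ = W * (Y * Yᴴ) * Wᴴ`. Conjugating by the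
isometry `W` preserves positivity and squares (`Wᴴ * W = 1`), so `W * √(Y * Yᴴ) * Wᴴ` is a
positive square root of `X * Xᴴ`, hence equal to `√(X * Xᴴ)` by uniqueness; multiplying on the
right by `W` gives the claim. -/

open Matrix ComplexOrder

namespace Matrix.PosSemidef

/-- The positive semidefinite square root of a positive semidefinite matrix
(the definition `Matrix.PosSemidef.sqrt` of the older Mathlib, since removed). -/
noncomputable def sqrt {n 𝕜 : Type*} [Fintype n] [RCLike 𝕜] [DecidableEq n] {A : Matrix n n 𝕜}
    (hA : PosSemidef A) : Matrix n n 𝕜 :=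
  hA.1.eigenvectorUnitary.1 * diagonal ((↑) ∘ (√·) ∘ hA.1.eigenvalues) *
  (star hA.1.eigenvectorUnitary : Matrix n n 𝕜)

variable {m n 𝕜 : Type*} [Fintype m] [Fintype n] [RCLike 𝕜] [DecidableEq m] [DecidableEq n]

open scoped MatrixOrder

lemma sqrt_eq_cfcSqrt {A : Matrix n n 𝕜} (hA : PosSemidef A) : hA.sqrt = CFC.sqrt A := by
  rw [CFC.sqrt_eq_real_sqrt A hA.nonneg, cfcₙ_eq_cfc, hA.1.cfc_eq]
  simp [IsHermitian.cfc, sqrt, Function.comp_def]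

lemma sqrt_mul_self {A : Matrix n n 𝕜} (hA : PosSemidef A) : hA.sqrt * hA.sqrt = A := by
  rw [sqrt_eq_cfcSqrt]
  exact CFC.sqrt_mul_sqrt_self A hA.nonneg

lemma posSemidef_sqrt {A : Matrix n n 𝕜} (hA : PosSemidef A) : hA.sqrt.PosSemidef := by
  rw [sqrt_eq_cfcSqrt]
  exact (CFC.sqrt_nonneg A).posSemidef

lemma eq_sqrt_of_mul_self_eq {A B : Matrix n n 𝕜} (hA : PosSemidef A) (hB : PosSemidef B)
    (h : B * B = A) : B = hA.sqrt := by
  rw [sqrt_eq_cfcSqrt, eq_comm, CFC.sqrt_eq_iff A B hA.nonneg hB.nonneg, h]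

lemma sqrt_eq_mul_sqrt_mul_conjTranspose {A : Matrix m m 𝕜} {B : Matrix n n 𝕜}
    (hA : PosSemidef A) (hB : PosSemidef B) {W : Matrix n m 𝕜} (hW : Wᴴ * W = 1)
    (hBA : B = W * A * Wᴴ) : hB.sqrt = W * hA.sqrt * Wᴴ := by
  refine (eq_sqrt_of_mul_self_eq hB
    (hA.posSemidef_sqrt.mul_mul_conjTranspose_same W) ?_).symm
  calc W * hA.sqrt * Wᴴ * (W * hA.sqrt * Wᴴ)
      = W * (hA.sqrt * (Wᴴ * W) * hA.sqrt) * Wᴴ := by simp only [Matrix.mul_assoc]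
    _ = B := by rw [hW, Matrix.mul_one, hA.sqrt_mul_self, hBA]

end Matrix.PosSemidef

lemma Matrix.mul_conjTranspose_eq_of_mul_eq {α l m n p : Type*} [Fintype l] [Fintype m]
    [Fintype n] [DecidableEq m] [Semiring α] [StarRing α]
    {X : Matrix p m α} {Y : Matrix n l α} {V : Matrix m l α} {W : Matrix p n α}
    (hV : V * Vᴴ = 1) (hXY : X * V = W * Y) : X * Xᴴ = W * (Y * Yᴴ) * Wᴴ :=
  calc X * Xᴴ = X * V * (X * V)ᴴ := by
        rw [conjTranspose_mul, Matrix.mul_assoc, ← Matrix.mul_assoc V, hV, Matrix.one_mul]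
    _ = W * (Y * Yᴴ) * Wᴴ := by
        rw [hXY, conjTranspose_mul]
        simp only [Matrix.mul_assoc]

theorem polar_trick_matrix_general {a a' b b' : Type*}
    [Fintype a] [Fintype a'] [Fintype b] [Fintype b']
    [DecidableEq a'] [DecidableEq b] [DecidableEq b']
    (X : Matrix b' b ℂ) (Y : Matrix a' a ℂ) (V : Matrix b a ℂ) (W : Matrix b' a' ℂ)
    (hV₂ : V * Vᴴ = 1) (hW₁ : Wᴴ * W = 1)
    (hXY : X * V = W * Y) :
    (Matrix.posSemidef_self_mul_conjTranspose X).sqrt * W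
      = W * (Matrix.posSemidef_self_mul_conjTranspose Y).sqrt := by
  rw [PosSemidef.sqrt_eq_mul_sqrt_mul_conjTranspose _ _ hW₁
    (mul_conjTranspose_eq_of_mul_eq hV₂ hXY), Matrix.mul_assoc, hW₁, Matrix.mul_one]

/-- **Proposition 1.4 ('prop:trick'), matrix form.**
Let `X : Matrix b' b ℂ`, `Y : Matrix a' a ℂ`, and let `V : Matrix b a ℂ` and
`W : Matrix b' a' ℂ` be unitary isomorphisms (`Vᴴ * V = 1`, `V * Vᴴ = 1`, etc.).
If `X * V = W * Y` then `√(X * Xᴴ) * W = W * √(Y * Yᴴ)`, where `√` is the positive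
semidefinite square root. -/
theorem polar_trick_matrix {a a' b b' : Type*}
    [Fintype a] [Fintype a'] [Fintype b] [Fintype b']
    [DecidableEq a] [DecidableEq a'] [DecidableEq b] [DecidableEq b']
    (X : Matrix b' b ℂ) (Y : Matrix a' a ℂ) (V : Matrix b a ℂ) (W : Matrix b' a' ℂ)
    (hV₁ : Vᴴ * V = 1) (hV₂ : V * Vᴴ = 1) (hW₁ : Wᴴ * W = 1) (hW₂ : W * Wᴴ = 1)
    (hXY : X * V = W * Y) :
    (Matrix.posSemidef_self_mul_conjTranspose X).sqrt * W
      = W * (Matrix.posSemidef_self_mul_conjTranspose Y).sqrt :=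
  polar_trick_matrix_general X Y V W hV₂ hW₁ hXY
end

section
/- Let G be a group, n ≥ 1 a natural number, p : G → G → ℝ_{>0} a function valued in the positive reals, and η : G → ℂˣ a function such that (p(g,h))ⁿ = η(g)·η(h)·η(g·h)⁻¹ in ℂˣ for all g, h ∈ G (regarding positive reals as nonzero complex numbers). Then there exists ε : G → ℝ_{>0} such that p(g,h) = ε(g)·ε(h)·ε(g·h)⁻¹ for all g, h ∈ G. -/
open scoped NNReal

/-- **Root extraction for positive 2-cochains**
(the heart of the proof of Proposition 2.6 'prop:functorstep2' of the paper).
If a positive-real-valued 2-cochain `p` on a group `G` has `n`-th power (`n ≥ 1`)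
equal, inside `ℂˣ`, to the coboundary of some `η : G → ℂˣ`, then `p` itself is the
coboundary of a positive-real-valued 1-cochain. -/
theorem pos_root_of_coboundary_pow {G : Type*} [Group G] (n : ℕ) (hn : 1 ≤ n)
    (p : G → G → ℝ≥0ˣ) (η : G → ℂˣ)
    (h : ∀ g h' : G, ((((p g h' : ℝ≥0) : ℝ) : ℂ)) ^ n
        = ((η g * η h' * (η (g * h'))⁻¹ : ℂˣ) : ℂ)) :
    ∃ ε : G → ℝ≥0ˣ, ∀ g h' : G, p g h' = ε g * ε h' * (ε (g * h'))⁻¹ := by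
  have hn0 : (n : ℝ) ≠ 0 := by positivity
  set a : G → ℝ≥0 := fun g => ‖(η g : ℂ)‖₊ with ha
  have ha0 : ∀ g, a g ≠ 0 := fun g => nnnorm_ne_zero_iff.mpr (η g).ne_zero
  have haroot : ∀ g, a g ^ ((n : ℝ)⁻¹) ≠ 0 := fun g => by
    simp [NNReal.rpow_eq_zero_iff, ha0 g]
  refine ⟨fun g => Units.mk0 (a g ^ ((n : ℝ)⁻¹)) (haroot g), fun g h' => ?_⟩
  apply Units.ext
  have key : ((p g h' : ℝ≥0)) ^ n = a g * a h' * (a (g * h'))⁻¹ := by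
    have := congrArg (fun z : ℂ => ‖z‖₊) (h g h')
    simpa [Complex.nnnorm_real, nnnorm_pow, ha, mul_assoc] using this
  have : (((p g h' : ℝ≥0)) ^ n) ^ ((n : ℝ)⁻¹)
      = (a g * a h' * (a (g * h'))⁻¹) ^ ((n : ℝ)⁻¹) := by rw [key]
  rw [← NNReal.rpow_natCast, ← NNReal.rpow_mul, mul_inv_cancel₀ hn0, NNReal.rpow_one,
    NNReal.mul_rpow, NNReal.mul_rpow, NNReal.inv_rpow] at this
  simpa using this
end

section
/- Let G be a finite group and let ω : G → G → ℂˣ be a 2-cocycle with trivial G-action, i.e. ω(g,h)·ω(g·h,k) = ω(h,k)·ω(g,h·k) for all g, h, k ∈ G. Then ω is cohomologous to a unit-modulus cocycle: there exist a 2-cocycle u : G → G → U(1) valued in the circle group (satisfying the same cocycle identity) and a function τ : G → ℝ_{>0} such that ω(g,h) = u(g,h)·τ(g)·τ(h)·τ(g·h)⁻¹ in ℂˣ for all g, h ∈ G. -/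
/-!
Write `ω = u · |ω|` with `u = ω / |ω|` circle-valued. Both factors are again cocycles, since
`z ↦ z / |z|` and `z ↦ |z|` are homomorphisms on `ℂˣ`. Multiplying the cocycle identity of
`r = |ω|` over all `k` gives `r(g,h)^n · σ(gh) = σ(g) · σ(h)` with `σ(g) = ∏ₖ r(g,k)` and
`n = |G|`, so `τ = σ^{1/n}` satisfies `r(g,h) = τ(g) τ(h) / τ(gh)`, because `n`-th roots of
positive reals exist and are unique.
-/

open scoped NNReal

/-- The 2-cocycle condition for the trivial action of `G` on `M`. -/
def IsTwoCocycle {G M : Type*} [Mul G] [Mul M] (ω : G → G → M) : Prop :=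
  ∀ g h k : G, ω g h * ω (g * h) k = ω h k * ω g (h * k)

namespace IsTwoCocycle

variable {G M N : Type*}

theorem map [Mul G] [MulOneClass M] [MulOneClass N] {ω : G → G → M} (hω : IsTwoCocycle ω)
    (f : M →* N) : IsTwoCocycle fun g h ↦ f (ω g h) := fun g h k ↦ by
  simp only [← map_mul, hω g h k]

theorem pow_card_mul_prod [Group G] [Fintype G] [CommMonoid M] {ω : G → G → M}
    (hω : IsTwoCocycle ω) (g h : G) :
    ω g h ^ Fintype.card G * ∏ k, ω (g * h) k = (∏ k, ω g k) * ∏ k, ω h k := by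
  have hprod := Finset.prod_congr rfl fun k (_ : k ∈ Finset.univ) ↦ hω g h k
  rw [Finset.prod_mul_distrib, Finset.prod_mul_distrib, Finset.prod_const, Finset.card_univ,
    Fintype.prod_equiv (Equiv.mulLeft h) (fun k ↦ ω g (h * k)) (ω g) fun _ ↦ rfl] at hprod
  rw [hprod, mul_comm]

theorem exists_eq_coboundary [Group G] [Fintype G] [CommGroup M] [IsMulTorsionFree M]
    (hroot : Function.Surjective fun x : M ↦ x ^ Fintype.card G)
    {ω : G → G → M} (hω : IsTwoCocycle ω) :
    ∃ τ : G → M, ∀ g h, ω g h = τ g * τ h / τ (g * h) := by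
  choose τ hτ using fun g ↦ hroot (∏ k, ω g k)
  refine ⟨τ, fun g h ↦ pow_left_injective (Fintype.card_ne_zero (α := G)) ?_⟩
  simp only [div_pow, mul_pow, hτ, eq_div_iff_mul_eq', hω.pow_card_mul_prod]

end IsTwoCocycle

theorem NNReal.units_pow_surjective {n : ℕ} (hn : n ≠ 0) :
    Function.Surjective fun x : ℝ≥0ˣ ↦ x ^ n := by
  intro x
  refine ⟨Units.mk0 ((x : ℝ≥0) ^ (n⁻¹ : ℝ)) (by simp), Units.ext ?_⟩
  simp [NNReal.rpow_inv_natCast_pow _ hn]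

namespace Complex

noncomputable def unitsPhase : ℂˣ →* Circle where
  toFun z := ⟨z / ‖(z : ℂ)‖, by simp [Submonoid.unitSphere]⟩
  map_one' := Circle.ext (show ((1 : ℂˣ) : ℂ) / ‖((1 : ℂˣ) : ℂ)‖ = 1 by simp)
  map_mul' z w := Circle.ext <| show ((z * w : ℂˣ) : ℂ) / ‖((z * w : ℂˣ) : ℂ)‖ =
      (z / ‖(z : ℂ)‖) * (w / ‖(w : ℂ)‖) by push_cast [norm_mul]; ring

noncomputable def unitsNNNorm : ℂˣ →* ℝ≥0ˣ := Units.map (nnnormHom : ℂ →*₀ ℝ≥0).toMonoidHom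

theorem coe_eq_unitsPhase_mul_unitsNNNorm (z : ℂˣ) :
    (z : ℂ) = unitsPhase z * (((unitsNNNorm z : ℝ≥0) : ℝ) : ℂ) := by
  have : ‖(z : ℂ)‖ ≠ 0 := by simp
  change (z : ℂ) = z / ‖(z : ℂ)‖ * ‖(z : ℂ)‖
  field_simp

end Complex

/-- **Every `ℂˣ`-valued 2-cocycle on a finite group is cohomologous to a unit-modulus
cocycle** (the degree-2 surjectivity statement of the paper's 'cohomological
perspective'). There exist a circle-valued 2-cocycle `u` and `τ : G → ℝ_{>0}` with
`ω(g,h) = u(g,h) · τ(g) · τ(h) · τ(gh)⁻¹` in `ℂ`. -/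
theorem cocycle_cohomologous_to_circle {G : Type*} [Group G] [Finite G]
    (ω : G → G → ℂˣ)
    (hω : ∀ g h k : G, ω g h * ω (g * h) k = ω h k * ω g (h * k)) :
    ∃ u : G → G → Circle,
      (∀ g h k : G, u g h * u (g * h) k = u h k * u g (h * k)) ∧
      ∃ τ : G → ℝ≥0ˣ, ∀ g h : G,
        ((ω g h : ℂˣ) : ℂ)
          = (u g h : ℂ) * (((τ g : ℝ≥0) : ℝ) : ℂ) * (((τ h : ℝ≥0) : ℝ) : ℂ)
            * ((((τ (g * h) : ℝ≥0) : ℝ) : ℂ))⁻¹ := by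
  have := Fintype.ofFinite G
  have hω : IsTwoCocycle ω := hω
  obtain ⟨τ, hτ⟩ := (hω.map Complex.unitsNNNorm).exists_eq_coboundary
    (NNReal.units_pow_surjective (Fintype.card_ne_zero (α := G)))
  refine ⟨fun g h ↦ Complex.unitsPhase (ω g h), hω.map _, τ, fun g h ↦ ?_⟩
  rw [Complex.coe_eq_unitsPhase_mul_unitsNNNorm (ω g h), hτ g h]
  push_cast
  ring
end
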